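/- arXiv:2507.09421 — 4 statements merged into one kernel-verified Lean document; each statement's English description precedes it below -/
import Mathlib

section
/- Let Q be the transition rate matrix of an irreducible continuous-time Markov chain on [n] with stationary distribution w, let M_1,...,M_n be d×d real matrices, let M = Σ_i w_i M_i, and let v ∈ ℝ^d. Then for each index m ∈ [d], there exists a vector z ∈ ℝ^n with all entries strictly positive such that for every i ∈ [n]: Σ_{j≠i} q_{ij}(z_j − z_i) + (v M_i)_m = w_i^{-1} n^{-1} (v M)_m. -/
open Matrix BigOperators

/-- Lemma: existence of a strictly positive vector `z` satisfying the averaging identity. -/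
theorem exists_z_vector
    (n d : ℕ) (hn : 0 < n) (Q : Matrix (Fin n) (Fin n) ℝ)
    (hoff : ∀ i j, i ≠ j → 0 ≤ Q i j)
    (hrow : ∀ i, ∑ j, Q i j = 0)
    (hirr : ∀ i j, i ≠ j → Relation.TransGen (fun a b => 0 < Q a b) i j)
    (w : Fin n → ℝ) (hw : ∀ i, 0 < w i) (hwsum : ∑ i, w i = 1)
    (hstat : w ᵥ* Q = 0)
    (Mi : Fin n → Matrix (Fin d) (Fin d) ℝ) (M : Matrix (Fin d) (Fin d) ℝ)
    (hM : M = ∑ i, w i • Mi i)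
    (v : Fin d → ℝ) (m : Fin d) :
    ∃ z : Fin n → ℝ, (∀ i, 0 < z i) ∧
      ∀ i, (∑ j ∈ Finset.univ.erase i, Q i j * (z j - z i)) + (v ᵥ* Mi i) m
        = (w i)⁻¹ * (n : ℝ)⁻¹ * (v ᵥ* M) m := by
  haveI : NeZero n := ⟨hn.ne'⟩
  set A : ℝ := (v ᵥ* M) m with hA
  have hAsum : A = ∑ i, w i * (v ᵥ* Mi i) m := by
    simp only [hA, hM, vecMul, dotProduct, Matrix.sum_apply, Matrix.smul_apply, smul_eq_mul,
      Finset.mul_sum]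
    rw [Finset.sum_comm]
    congr 1; ext i; congr 1; ext k; ring
  -- diagonal entries are nonpositive
  have hdiag : ∀ a, Q a a ≤ 0 := by
    intro a
    have h1 : Q a a = -∑ j ∈ Finset.univ.erase a, Q a j := by
      have := hrow a
      rw [← Finset.sum_erase_add _ _ (Finset.mem_univ a)] at this
      linarith
    rw [h1, neg_nonpos]
    exact Finset.sum_nonneg fun j hj => hoff a j (Ne.symm (Finset.ne_of_mem_erase hj))
  -- maximum principle: kernel of mulVec consists of constants
  have hconst : ∀ x : Fin n → ℝ, Q.mulVec x = 0 → ∀ i j, x i = x j := by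
    intro x hx
    obtain ⟨i0, -, hmax⟩ := Finset.exists_max_image Finset.univ x ⟨⟨0, hn⟩, Finset.mem_univ _⟩
    have step : ∀ a b : Fin n, (∀ k, x k ≤ x a) → 0 < Q a b → x b = x a := by
      intro a b hamax hab
      have hab' : a ≠ b := by rintro rfl; exact absurd hab (not_lt.mpr (hdiag a))
      have h1 : (∑ j, Q a j * x j) = 0 := congrFun hx a
      have h0 : (∑ j, Q a j * (x j - x a)) = 0 := by
        have h2 : (∑ j, Q a j * x a) = 0 := by rw [← Finset.sum_mul, hrow, zero_mul]
        calc (∑ j, Q a j * (x j - x a)) = (∑ j, Q a j * x j) - (∑ j, Q a j * x a) := by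
              rw [← Finset.sum_sub_distrib]; congr 1; ext j; ring
          _ = 0 := by rw [h1, h2, sub_zero]
      have h0' : (∑ j ∈ Finset.univ.erase a, Q a j * (x j - x a)) = 0 := by
        rw [← h0]; symm
        rw [← Finset.sum_erase_add _ _ (Finset.mem_univ a)]
        simp
      have hnp : ∀ j ∈ Finset.univ.erase a, Q a j * (x j - x a) ≤ 0 := fun j hj =>
        mul_nonpos_of_nonneg_of_nonpos (hoff a j (Ne.symm (Finset.ne_of_mem_erase hj)))
          (sub_nonpos.mpr (hamax j))
      have hz := (Finset.sum_eq_zero_iff_of_nonpos hnp).mp h0' b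
        (Finset.mem_erase.mpr ⟨hab'.symm, Finset.mem_univ b⟩)
      rcases mul_eq_zero.mp hz with h | h
      · exact absurd h hab.ne'
      · linarith
    have hmax' : ∀ k, x k ≤ x i0 := fun k => hmax k (Finset.mem_univ k)
    have hreach : ∀ j, Relation.TransGen (fun a b => 0 < Q a b) i0 j → x j = x i0 := by
      intro j h
      induction h with
      | single h => exact step i0 _ hmax' h
      | tail _ h ih =>
          exact (step _ _ (fun k => (hmax' k).trans_eq ih.symm) h).trans ih
    have hall : ∀ j, x j = x i0 := by
      intro j
      by_cases hj : j = i0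
      · rw [hj]
      · exact hreach j (hirr i0 j (Ne.symm hj))
    intro i j; rw [hall i, hall j]
  -- linear functional
  set φ : (Fin n → ℝ) →ₗ[ℝ] ℝ :=
    { toFun := fun c => ∑ i, w i * c i
      map_add' := by intro a b; simp [mul_add, Finset.sum_add_distrib]
      map_smul' := by
        intro r a
        simp only [Pi.smul_apply, smul_eq_mul, RingHom.id_apply, Finset.mul_sum]
        congr 1; ext i; ring } with hφdef
  have hφone : φ (fun _ => 1) = 1 := by simp [hφdef, hwsum]
  -- range of φ has positive finrank
  have hφrange : 1 ≤ Module.finrank ℝ (LinearMap.range φ) := by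
    have : Nontrivial (LinearMap.range φ) := by
      refine ⟨⟨⟨1, ?_⟩, 0, ?_⟩⟩
      · exact ⟨fun _ => 1, hφone⟩
      · intro h; simpa using congrArg Subtype.val h
    exact Module.finrank_pos
  -- kernel of mulVecLin is contained in span of constant vector
  have hone : (fun _ : Fin n => (1 : ℝ)) ≠ 0 := by
    intro h
    have := congrFun h ⟨0, hn⟩
    norm_num at this
  have hkerle : LinearMap.ker Q.mulVecLin ≤ Submodule.span ℝ {fun _ : Fin n => (1 : ℝ)} := by
    intro x hx
    have hc := hconst x (by simpa [Matrix.mulVecLin] using hx)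
    rw [Submodule.mem_span_singleton]
    exact ⟨x ⟨0, hn⟩, by ext j; simp [hc j ⟨0, hn⟩]⟩
  have hkerfr : Module.finrank ℝ (LinearMap.ker Q.mulVecLin) ≤ 1 := by
    calc Module.finrank ℝ (LinearMap.ker Q.mulVecLin)
        ≤ Module.finrank ℝ (Submodule.span ℝ {fun _ : Fin n => (1 : ℝ)}) :=
          Submodule.finrank_mono hkerle
      _ = 1 := finrank_span_singleton hone
  have hrn1 := LinearMap.finrank_range_add_finrank_ker Q.mulVecLin
  have hrn2 := LinearMap.finrank_range_add_finrank_ker φ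
  have hφrank : Module.finrank ℝ (LinearMap.range φ) ≤ 1 :=
    (Submodule.finrank_le _).trans (by simp)
  have hdim : Module.finrank ℝ (Fin n → ℝ) = n := by simp
  rw [hdim] at hrn1 hrn2
  -- range of mulVecLin contains ker φ
  have hle : LinearMap.range Q.mulVecLin ≤ LinearMap.ker φ := by
    rintro _ ⟨x, rfl⟩
    have : ∑ i, w i * (Q.mulVec x) i = 0 := by
      simp only [Matrix.mulVec, dotProduct, Finset.mul_sum]
      rw [Finset.sum_comm]
      have hs : ∀ j, ∑ i, w i * (Q i j * x j) = 0 := by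
        intro j
        have := congrFun hstat j
        simp only [Matrix.vecMul, dotProduct, Pi.zero_apply] at this
        calc ∑ i, w i * (Q i j * x j) = (∑ i, w i * Q i j) * x j := by
              rw [Finset.sum_mul]; congr 1; ext i; ring
          _ = 0 := by rw [this, zero_mul]
      simp [hs]
    simpa [hφdef, Matrix.mulVecLin] using this
  have heq : LinearMap.range Q.mulVecLin = LinearMap.ker φ := by
    apply Submodule.eq_of_le_of_finrank_le hle
    omega
  -- the target vector
  set c : Fin n → ℝ := fun i => (w i)⁻¹ * (n : ℝ)⁻¹ * A - (v ᵥ* Mi i) m with hc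
  have hφc : φ c = 0 := by
    simp only [hφdef, hc, LinearMap.coe_mk, AddHom.coe_mk, mul_sub]
    rw [Finset.sum_sub_distrib]
    have h1 : (∑ i, w i * ((w i)⁻¹ * (n : ℝ)⁻¹ * A)) = A := by
      have hn0 : (n : ℝ) ≠ 0 := Nat.cast_ne_zero.mpr hn.ne'
      have : ∀ i : Fin n, w i * ((w i)⁻¹ * (n : ℝ)⁻¹ * A) = (n : ℝ)⁻¹ * A := by
        intro i
        have hwi := (hw i).ne'
        field_simp
      rw [Finset.sum_congr rfl fun i _ => this i]
      rw [Finset.sum_const, Finset.card_univ, Fintype.card_fin, nsmul_eq_mul]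
      field_simp
    rw [h1, ← hAsum, sub_self]
  obtain ⟨z0, hz0⟩ : c ∈ LinearMap.range Q.mulVecLin := heq ▸ hφc
  -- re-state: Q.mulVec z0 = c
  have hz0' : Q.mulVec z0 = c := by simpa [Matrix.mulVecLin] using hz0
  -- shift to make positive
  set C : ℝ := 1 + ∑ j, |z0 j| with hC
  refine ⟨fun j => z0 j + C, ?_, ?_⟩
  · intro i
    have h1 : |z0 i| ≤ ∑ j, |z0 j| :=
      Finset.single_le_sum (fun j _ => abs_nonneg (z0 j)) (Finset.mem_univ i)
    have := neg_abs_le (z0 i)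
    simp only [hC]
    linarith
  · intro i
    have hQz : (∑ j ∈ Finset.univ.erase i, Q i j * ((z0 j + C) - (z0 i + C))) = (Q.mulVec z0) i := by
      have : ∀ j, (z0 j + C) - (z0 i + C) = z0 j - z0 i := by intro j; ring
      simp only [this]
      have hfull : (∑ j, Q i j * (z0 j - z0 i)) = (Q.mulVec z0) i := by
        simp only [Matrix.mulVec, dotProduct, mul_sub, Finset.sum_sub_distrib]
        rw [← Finset.sum_mul, hrow, zero_mul, sub_zero]
      rw [← hfull, ← Finset.sum_erase_add _ _ (Finset.mem_univ i)]
      simp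
    rw [hQz, hz0', hc]
    ring
end

section
/- Let v ∈ ℝ^d_{≥0}, let M be a d×d real matrix with (vM)_m > 0 for every m in the support of v, and let Ξ ⊂ ℝ^d be a finite set such that every ξ ∈ Ξ has support intersecting the support of v. Then there exists a vector v' ∈ ℝ^d_{≥0} such that: (a) (v'M)_m > 0 for each m with v'_m > 0; (b) supp(v') = supp(v); and (c) v'·ξ ≠ 0 for all ξ ∈ Ξ. -/
/-!
Rescale the coordinates of `v` along the curve `t ↦ (v m * t ^ m)_m`, which passes through `v`
at `t = 1` and keeps its support and sign for `t > 0`. Positivity of `(v' M)_m` on the support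
is an open condition, so it persists for `t` near `1`. For each `ξ ∈ Ξ`, `v' ⬝ᵥ ξ` is a polynomial
in `t` whose coefficient of `t ^ m` is `v m * ξ m`; it is nonzero because the supports of `v`
and `ξ` meet, so it vanishes at only finitely many `t`. A punctured neighbourhood of `1` thus
contains a good `t`.
-/

open Matrix Filter Topology Polynomial

namespace PowerScaling

variable {d : ℕ}

def scaleByPowers (v : Fin d → ℝ) (t : ℝ) : Fin d → ℝ := fun m => v m * t ^ (m : ℕ)

noncomputable def dotProductPoly (v ξ : Fin d → ℝ) : ℝ[X] := ∑ m, C (v m * ξ m) * X ^ (m : ℕ)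

@[simp]
theorem scaleByPowers_one (v : Fin d → ℝ) : scaleByPowers v 1 = v := by
  funext m; simp [scaleByPowers]

theorem scaleByPowers_nonneg {v : Fin d → ℝ} (hv : ∀ i, 0 ≤ v i) {t : ℝ} (ht : 0 ≤ t)
    (i : Fin d) : 0 ≤ scaleByPowers v t i :=
  mul_nonneg (hv i) (pow_nonneg ht _)

theorem scaleByPowers_ne_zero_iff {v : Fin d → ℝ} {t : ℝ} (ht : t ≠ 0) (m : Fin d) :
    scaleByPowers v t m ≠ 0 ↔ v m ≠ 0 := by
  simp [scaleByPowers, ht]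

theorem continuous_scaleByPowers (v : Fin d → ℝ) : Continuous (scaleByPowers v) :=
  continuous_pi fun _ => continuous_const.mul (continuous_pow _)

theorem eval_dotProductPoly (v ξ : Fin d → ℝ) (t : ℝ) :
    (dotProductPoly v ξ).eval t = scaleByPowers v t ⬝ᵥ ξ := by
  simp only [dotProductPoly, eval_finsetSum, eval_mul, eval_C, eval_pow, eval_X, dotProduct,
    scaleByPowers]
  exact Finset.sum_congr rfl fun m _ => by ring

theorem coeff_dotProductPoly (v ξ : Fin d → ℝ) (m : Fin d) :
    (dotProductPoly v ξ).coeff m = v m * ξ m := by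
  simp only [dotProductPoly, finsetSum_coeff, coeff_C_mul, coeff_X_pow, Fin.val_eq_val]
  simp

theorem dotProductPoly_ne_zero {v ξ : Fin d → ℝ} (h : ∃ m, v m ≠ 0 ∧ ξ m ≠ 0) :
    dotProductPoly v ξ ≠ 0 := by
  obtain ⟨m, hvm, hξm⟩ := h
  intro hzero
  have hcoeff := coeff_dotProductPoly v ξ m
  rw [hzero, coeff_zero] at hcoeff
  exact mul_ne_zero hvm hξm hcoeff.symm

theorem eventually_scaleByPowers_dotProduct_ne_zero {v ξ : Fin d → ℝ}
    (h : ∃ m, v m ≠ 0 ∧ ξ m ≠ 0) (a : ℝ) :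
    ∀ᶠ t in 𝓝[≠] a, scaleByPowers v t ⬝ᵥ ξ ≠ 0 := by
  have hroots : {t | (dotProductPoly v ξ).IsRoot t}.Finite :=
    Set.not_infinite.mp (mt (eq_zero_of_infinite_isRoot _) (dotProductPoly_ne_zero h))
  filter_upwards [(hroots.eventually_cofinite_notMem).filter_mono (nhdsNE_le_cofinite a)]
    with t ht
  rwa [← eval_dotProductPoly]

theorem eventually_vecMul_scaleByPowers_pos {v : Fin d → ℝ} (M : Matrix (Fin d) (Fin d) ℝ)
    (hvM : ∀ m, v m ≠ 0 → 0 < (v ᵥ* M) m) :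
    ∀ᶠ t in 𝓝 1, ∀ m, v m ≠ 0 → 0 < (scaleByPowers v t ᵥ* M) m := by
  refine eventually_all.mpr fun m => ?_
  by_cases hvm : v m = 0
  · exact .of_forall fun _ h => absurd hvm h
  have hcont : Continuous fun t => (scaleByPowers v t ᵥ* M) m :=
    (continuous_apply m).comp ((continuous_scaleByPowers v).matrix_vecMul continuous_const)
  have hpos : 0 < (scaleByPowers v 1 ᵥ* M) m := by simpa using hvM m hvm
  exact (continuousAt_const.eventually_lt hcont.continuousAt hpos).mono fun _ h _ => h

end PowerScaling

open PowerScaling in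
/-- We may perturb `v` so that it is not orthogonal to any vector in a finite family `Ξ`
whose members all have support intersecting that of `v`. -/
theorem perturb_v_not_orthogonal
    (d : ℕ) (v : Fin d → ℝ) (hv : ∀ i, 0 ≤ v i)
    (M : Matrix (Fin d) (Fin d) ℝ)
    (hvM : ∀ m, v m ≠ 0 → 0 < (v ᵥ* M) m)
    (Ξ : Finset (Fin d → ℝ))
    (hΞ : ∀ ξ ∈ Ξ, ∃ m, v m ≠ 0 ∧ ξ m ≠ 0) :
    ∃ v' : Fin d → ℝ, (∀ i, 0 ≤ v' i) ∧
      (∀ m, v' m ≠ 0 → 0 < (v' ᵥ* M) m) ∧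
      (∀ m, v' m ≠ 0 ↔ v m ≠ 0) ∧
      ∀ ξ ∈ Ξ, v' ⬝ᵥ ξ ≠ 0 := by
  have hnear : ∀ᶠ t in 𝓝 (1 : ℝ), 0 < t ∧ ∀ m, v m ≠ 0 → 0 < (scaleByPowers v t ᵥ* M) m :=
    (eventually_gt_nhds one_pos).and (eventually_vecMul_scaleByPowers_pos M hvM)
  have hnonorth : ∀ᶠ t in 𝓝[≠] (1 : ℝ), ∀ ξ ∈ Ξ, scaleByPowers v t ⬝ᵥ ξ ≠ 0 :=
    (eventually_all_finset Ξ).mpr fun ξ hξ =>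
      eventually_scaleByPowers_dotProduct_ne_zero (hΞ ξ hξ) 1
  obtain ⟨t, ⟨ht, htM⟩, htΞ⟩ := ((hnear.filter_mono nhdsWithin_le_nhds).and hnonorth).exists
  have hsupp : ∀ m, scaleByPowers v t m ≠ 0 ↔ v m ≠ 0 := scaleByPowers_ne_zero_iff ht.ne'
  exact ⟨scaleByPowers v t, scaleByPowers_nonneg hv ht.le, fun m hm => htM m ((hsupp m).mp hm),
    hsupp, htΞ⟩
end

section
/- Let M be a d×d Metzler matrix. If there exists a nonempty subset I ⊆ [d] such that the principal submatrix M^I is Hurwitz-unstable (has an eigenvalue with strictly positive real part), then M itself is Hurwitz-unstable. -/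
open Matrix BigOperators

private lemma entry_abs_le_total {d : ℕ} (V : Matrix (Fin d) (Fin d) ℝ) (i j : Fin d) :
    |V i j| ≤ ∑ p, ∑ q, |V p q| := by
  have h1 : |V i j| ≤ ∑ q, |V i q| :=
    Finset.single_le_sum (f := fun q => |V i q|) (fun q _ => abs_nonneg _) (Finset.mem_univ j)
  have h2 : (∑ q, |V i q|) ≤ ∑ p, ∑ q, |V p q| :=
    Finset.single_le_sum (f := fun p => ∑ q, |V p q|) (fun p _ => Finset.sum_nonneg fun q _ => abs_nonneg _)
      (Finset.mem_univ i)
  linarith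

private lemma pow_entry_nonneg {d : ℕ} {Q : Matrix (Fin d) (Fin d) ℝ}
    (hQ : ∀ i j, 0 ≤ Q i j) : ∀ (n : ℕ) (i j : Fin d), 0 ≤ (Q ^ n) i j := by
  intro n
  induction n with
  | zero =>
    intro i j
    rw [pow_zero]
    by_cases h : i = j <;> simp [Matrix.one_apply, h]
  | succ n ih =>
    intro i j
    rw [pow_succ, Matrix.mul_apply]
    exact Finset.sum_nonneg fun k _ => mul_nonneg (ih i k) (hQ k j)

private lemma geom_inv_nonneg {d : ℕ} (Q V : Matrix (Fin d) (Fin d) ℝ) (a : ℝ)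
    (hQ0 : ∀ i j, 0 ≤ Q i j) (hQa : ∀ i j, Q i j ≤ a)
    (hda : (d : ℝ) * a < 1)
    (hV : (1 - Q) * V = 1) : ∀ i j, 0 ≤ V i j := by
  intro i j
  have ha0 : 0 ≤ a := le_trans (hQ0 i i) (hQa i i)
  have hd0 : 0 ≤ (d : ℝ) * a := mul_nonneg (Nat.cast_nonneg d) ha0
  set b : ℝ := ∑ p, ∑ q, |V p q| with hb
  have hVb : ∀ p q, |V p q| ≤ b := fun p q => entry_abs_le_total V p q
  have hrec : V = 1 + Q * V := by
    have h := hV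
    rw [Matrix.sub_mul, Matrix.one_mul] at h
    rw [← h]; abel
  have hiter : ∀ n : ℕ, V = (∑ k ∈ Finset.range n, Q ^ k) + Q ^ n * V := by
    intro n
    induction n with
    | zero => simp
    | succ n ih =>
      calc V = (∑ k ∈ Finset.range n, Q ^ k) + Q ^ n * V := ih
        _ = (∑ k ∈ Finset.range n, Q ^ k) + Q ^ n * (1 + Q * V) := by rw [← hrec]
        _ = (∑ k ∈ Finset.range (n+1), Q ^ k) + Q ^ (n+1) * V := by
            rw [Finset.sum_range_succ, Matrix.mul_add, Matrix.mul_one, ← Matrix.mul_assoc,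
              ← pow_succ, add_assoc]
  have hbound : ∀ (n : ℕ) (p q : Fin d), |(Q ^ n * V) p q| ≤ ((d:ℝ)*a)^n * b := by
    intro n
    induction n with
    | zero => intro p q; simpa using hVb p q
    | succ n ih =>
      intro p q
      have h1 : Q ^ (n+1) * V = Q * (Q ^ n * V) := by rw [pow_succ', Matrix.mul_assoc]
      rw [h1, Matrix.mul_apply]
      calc |∑ k, Q p k * (Q ^ n * V) k q| ≤ ∑ k, |Q p k * (Q ^ n * V) k q| :=
            Finset.abs_sum_le_sum_abs _ _
        _ ≤ ∑ _k : Fin d, a * (((d:ℝ)*a)^n * b) := by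
            refine Finset.sum_le_sum fun k _ => ?_
            rw [abs_mul]
            exact mul_le_mul (by rw [abs_of_nonneg (hQ0 p k)]; exact hQa p k) (ih k q)
              (abs_nonneg _) ha0
        _ = ((d:ℝ)*a)^(n+1) * b := by
            simp [Finset.sum_const, Finset.card_univ]
            ring
  have hlow : ∀ n : ℕ, -(((d:ℝ)*a)^n * b) ≤ V i j := by
    intro n
    have h1 : V i j = (∑ k ∈ Finset.range n, Q ^ k) i j + (Q ^ n * V) i j := by
      conv_lhs => rw [hiter n]
      rw [Matrix.add_apply]
    have h2 : 0 ≤ (∑ k ∈ Finset.range n, Q ^ k) i j := by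
      rw [Matrix.sum_apply]
      exact Finset.sum_nonneg fun k _ => pow_entry_nonneg hQ0 k i j
    have h3 : -(((d:ℝ)*a)^n * b) ≤ (Q ^ n * V) i j := by
      have := hbound n i j
      have := neg_abs_le ((Q ^ n * V) i j)
      linarith
    linarith
  have htend : Filter.Tendsto (fun n : ℕ => -(((d:ℝ)*a)^n * b)) Filter.atTop (nhds 0) := by
    have h0 : Filter.Tendsto (fun n : ℕ => ((d:ℝ)*a)^n) Filter.atTop (nhds 0) := by
      apply tendsto_pow_atTop_nhds_zero_of_lt_one (by linarith) hda
    have := (h0.mul_const b).neg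
    simpa using this
  exact le_of_tendsto htend (Filter.Eventually.of_forall hlow)

private lemma resolvent_base {d : ℕ} (N : Matrix (Fin d) (Fin d) ℝ) (T E : ℝ)
    (hT0 : 0 < T)
    (hN0 : ∀ i j, 0 ≤ N i j) (hNE : ∀ i j, N i j ≤ E)
    (hdET : (d : ℝ) * E < T)
    (hRT : (T • 1 - N) * (T • (1 : Matrix (Fin d) (Fin d) ℝ) - N)⁻¹ = 1) :
    ∀ i j, 0 ≤ (T • (1 : Matrix (Fin d) (Fin d) ℝ) - N)⁻¹ i j := by
  have hV : (1 - T⁻¹ • N) * (T • (T • (1 : Matrix (Fin d) (Fin d) ℝ) - N)⁻¹) = 1 := by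
    have h1 : (1 : Matrix (Fin d) (Fin d) ℝ) - T⁻¹ • N = T⁻¹ • (T • 1 - N) := by
      rw [smul_sub, smul_smul, inv_mul_cancel₀ hT0.ne', one_smul]
    rw [h1, Matrix.smul_mul, Matrix.mul_smul, smul_smul, inv_mul_cancel₀ hT0.ne', one_smul, hRT]
  have h := geom_inv_nonneg (T⁻¹ • N) (T • (T • (1 : Matrix (Fin d) (Fin d) ℝ) - N)⁻¹) (E / T)
    (fun i j => by
      rw [Matrix.smul_apply, smul_eq_mul]
      exact mul_nonneg (inv_nonneg.mpr hT0.le) (hN0 i j))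
    (fun i j => by
      rw [Matrix.smul_apply, smul_eq_mul, div_eq_inv_mul]
      exact mul_le_mul_of_nonneg_left (hNE i j) (inv_nonneg.mpr hT0.le))
    (by rw [← mul_div_assoc, div_lt_one hT0]; exact hdET)
    hV
  intro i j
  have h2 := h i j
  rw [Matrix.smul_apply, smul_eq_mul] at h2
  nlinarith

private lemma resolvent_step {d : ℕ} (N : Matrix (Fin d) (Fin d) ℝ) (s t K : ℝ)
    (hst : s ≤ t)
    (hRt : (t • 1 - N) * (t • (1 : Matrix (Fin d) (Fin d) ℝ) - N)⁻¹ = 1)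
    (hRt' : (t • (1 : Matrix (Fin d) (Fin d) ℝ) - N)⁻¹ * (t • 1 - N) = 1)
    (hRs : (s • 1 - N) * (s • (1 : Matrix (Fin d) (Fin d) ℝ) - N)⁻¹ = 1)
    (hRt0 : ∀ i j, 0 ≤ (t • (1 : Matrix (Fin d) (Fin d) ℝ) - N)⁻¹ i j)
    (hRtK : ∀ i j, (t • (1 : Matrix (Fin d) (Fin d) ℝ) - N)⁻¹ i j ≤ K)
    (hq : (d : ℝ) * ((t - s) * K) < 1) :
    ∀ i j, 0 ≤ (s • (1 : Matrix (Fin d) (Fin d) ℝ) - N)⁻¹ i j := by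
  set Rt := (t • (1 : Matrix (Fin d) (Fin d) ℝ) - N)⁻¹ with hRtdef
  set Rs := (s • (1 : Matrix (Fin d) (Fin d) ℝ) - N)⁻¹ with hRsdef
  set Q : Matrix (Fin d) (Fin d) ℝ := (t - s) • Rt with hQdef
  have hQ0 : ∀ i j, 0 ≤ Q i j := fun i j => by
    rw [hQdef, Matrix.smul_apply, smul_eq_mul]
    exact mul_nonneg (sub_nonneg.mpr hst) (hRt0 i j)
  have hQa : ∀ i j, Q i j ≤ (t - s) * K := fun i j => by
    rw [hQdef, Matrix.smul_apply, smul_eq_mul]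
    exact mul_le_mul_of_nonneg_left (hRtK i j) (sub_nonneg.mpr hst)
  have h1Q : (1 : Matrix (Fin d) (Fin d) ℝ) - Q = (s • 1 - N) * Rt := by
    have hs1 : (s • (1 : Matrix (Fin d) (Fin d) ℝ) - N) = (t • 1 - N) - (t - s) • 1 := by
      rw [sub_smul]; abel
    rw [hs1, Matrix.sub_mul, hRt, Matrix.smul_mul, Matrix.one_mul]
  have hV : (1 - Q) * ((t • 1 - N) * Rs) = 1 := by
    rw [h1Q, Matrix.mul_assoc, ← Matrix.mul_assoc Rt, hRt', Matrix.one_mul, hRs]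
  have hV0 := geom_inv_nonneg Q ((t • 1 - N) * Rs) ((t - s) * K) hQ0 hQa hq hV
  intro i j
  have hRsid : Rs = Rt * ((t • 1 - N) * Rs) := by
    rw [← Matrix.mul_assoc, hRt', Matrix.one_mul]
  rw [hRsid, Matrix.mul_apply]
  exact Finset.sum_nonneg fun k _ => mul_nonneg (hRt0 i k) (hV0 k j)

/-- If some nonempty principal submatrix of a Metzler matrix is Hurwitz-unstable,
then so is the matrix itself. -/
theorem metzler_submatrix_unstable_implies_unstable
    (d : ℕ) (M : Matrix (Fin d) (Fin d) ℝ)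
    (hMet : ∀ i j, i ≠ j → 0 ≤ M i j)
    (I : Finset (Fin d)) (hI : I.Nonempty)
    (hunst : ∃ μ ∈ spectrum ℂ
      ((M.submatrix (Subtype.val : {x // x ∈ I} → Fin d) (Subtype.val : {x // x ∈ I} → Fin d)).map Complex.ofReal),
      0 < μ.re) :
    ∃ μ ∈ spectrum ℂ (M.map Complex.ofReal), 0 < μ.re := by
  classical
  by_contra hcon
  push_neg at hcon
  obtain ⟨μ, hμmem, hμre⟩ := hunst
  -- the shift constant
  set c : ℝ := ∑ k : Fin d, |M k k| with hc
  have hc0 : 0 ≤ c := Finset.sum_nonneg fun k _ => abs_nonneg _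
  have hcdiag : ∀ i : Fin d, |M i i| ≤ c := fun i =>
    Finset.single_le_sum (f := fun k => |M k k|) (fun k _ => abs_nonneg _) (Finset.mem_univ i)
  set N : Matrix (Fin d) (Fin d) ℝ := M + c • (1 : Matrix (Fin d) (Fin d) ℝ) with hN
  have hNentry : ∀ i j, N i j = M i j + if i = j then c else 0 := by
    intro i j
    by_cases h : i = j <;>
      simp [hN, Matrix.add_apply, Matrix.smul_apply, Matrix.one_apply, h]
  have hN0 : ∀ i j, 0 ≤ N i j := by
    intro i j
    rw [hNentry]
    split_ifs with h
    · subst h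
      have h1 := hcdiag i
      have h2 := neg_abs_le (M i i)
      linarith
    · rw [add_zero]
      exact hMet i j h
  -- spectrum of N is bounded by c in real part
  have hmapN : N.map Complex.ofReal = M.map Complex.ofReal + (c : ℂ) • 1 := by
    ext i j
    by_cases h : i = j <;>
      simp [hN, Matrix.map_apply, Matrix.add_apply, Matrix.smul_apply, Matrix.one_apply, h]
  have hspecN : ∀ z : ℂ, z ∈ spectrum ℂ (N.map Complex.ofReal) → z.re ≤ c := by
    intro z hz
    have h1 : (z - c) ∈ spectrum ℂ (M.map Complex.ofReal) := by
      rw [spectrum.mem_iff] at hz ⊢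
      intro hu
      apply hz
      have heq : algebraMap ℂ (Matrix (Fin d) (Fin d) ℂ) z - N.map Complex.ofReal
          = algebraMap ℂ (Matrix (Fin d) (Fin d) ℂ) (z - c) - M.map Complex.ofReal := by
        rw [hmapN, Algebra.algebraMap_eq_smul_one, Algebra.algebraMap_eq_smul_one, sub_smul]
        abel
      rw [heq]
      exact hu
    have h2 := hcon _ h1
    have h3 : (z - (c : ℂ)).re = z.re - c := by simp
    linarith [h2, h3 ▸ h2]
  -- invertibility of s•1 - N for s > c
  have hdet : ∀ s : ℝ, c < s → IsUnit ((s • (1 : Matrix (Fin d) (Fin d) ℝ) - N).det) := by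
    intro s hs
    rw [isUnit_iff_ne_zero]
    intro h0
    have hmaps : (s • (1 : Matrix (Fin d) (Fin d) ℝ) - N).map Complex.ofReal
        = algebraMap ℂ (Matrix (Fin d) (Fin d) ℂ) (s : ℂ) - N.map Complex.ofReal := by
      ext i j
      by_cases h : i = j <;>
        simp [Matrix.map_apply, Matrix.sub_apply, Matrix.smul_apply, Matrix.one_apply,
          Algebra.algebraMap_eq_smul_one, h]
    have hdc : ((s • (1 : Matrix (Fin d) (Fin d) ℝ) - N).map Complex.ofReal).det = 0 := by
      have := (RingHom.map_det Complex.ofRealHom (s • (1 : Matrix (Fin d) (Fin d) ℝ) - N)).symm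
      rw [RingHom.mapMatrix_apply] at this
      have h2 : (s • (1 : Matrix (Fin d) (Fin d) ℝ) - N).map ⇑Complex.ofRealHom
          = (s • (1 : Matrix (Fin d) (Fin d) ℝ) - N).map Complex.ofReal := rfl
      rw [h2] at this
      rw [this, h0]
      simp
    have hmem : (s : ℂ) ∈ spectrum ℂ (N.map Complex.ofReal) := by
      rw [spectrum.mem_iff]
      intro hu
      have := (Matrix.isUnit_iff_isUnit_det _).mp hu
      rw [← hmaps] at this
      rw [hdc] at this
      exact (isUnit_iff_ne_zero.mp this) rfl
    have := hspecN _ hmem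
    simp at this
    linarith
  -- extract an eigenvector of the submatrix
  set A' := (M.submatrix (Subtype.val : {x // x ∈ I} → Fin d) Subtype.val).map Complex.ofReal
    with hA'def
  rw [spectrum.mem_iff] at hμmem
  have hdet0 : (algebraMap ℂ (Matrix {x // x ∈ I} {x // x ∈ I} ℂ) μ - A').det = 0 := by
    by_contra h
    exact hμmem ((Matrix.isUnit_iff_isUnit_det _).mpr (isUnit_iff_ne_zero.mpr h))
  obtain ⟨v, hv0, hveq⟩ := Matrix.exists_mulVec_eq_zero_iff.mpr hdet0
  have heig : A' *ᵥ v = μ • v := by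
    rw [Matrix.sub_mulVec, Algebra.algebraMap_eq_smul_one, Matrix.smul_mulVec,
      Matrix.one_mulVec] at hveq
    exact (sub_eq_zero.mp hveq).symm
  -- nonnegative super-eigenvector of N
  set w : Fin d → ℝ := fun j => if h : j ∈ I then ‖v ⟨j, h⟩‖ else 0 with hwdef
  have hw0 : ∀ j, 0 ≤ w j := by
    intro j
    rw [hwdef]
    dsimp only
    split_ifs
    · exact norm_nonneg _
    · exact le_rfl
  -- the complexified eigen-equation for the shifted submatrix
  have hB' : ((N.submatrix (Subtype.val : {x // x ∈ I} → Fin d) Subtype.val).map Complex.ofReal)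
      *ᵥ v = (μ + (c : ℂ)) • v := by
    have hBeq : (N.submatrix (Subtype.val : {x // x ∈ I} → Fin d) Subtype.val).map Complex.ofReal
        = A' + (c : ℂ) • 1 := by
      ext x y
      simp only [Matrix.map_apply, Matrix.submatrix_apply, Matrix.add_apply, Matrix.smul_apply,
        Matrix.one_apply, hA'def, hNentry]
      by_cases h : x = y
      · subst h
        norm_num
      · have hvne : (x : Fin d) ≠ (y : Fin d) := fun hcc => h (Subtype.ext hcc)
        simp [h, hvne]
    rw [hBeq, Matrix.add_mulVec, heig, Matrix.smul_mulVec, Matrix.one_mulVec, ← add_smul]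
  -- the per-row inequality on I
  have hper : ∀ x : {y // y ∈ I}, (μ.re + c) * ‖v x‖
      ≤ ∑ y : {y // y ∈ I}, N x.val y.val * ‖v y‖ := by
    intro x
    have h1 : (μ + (c : ℂ)) * v x = ∑ y : {y // y ∈ I}, ((N x.val y.val : ℂ)) * v y := by
      have h2 := congrFun hB' x
      simp only [Matrix.mulVec, dotProduct, Matrix.map_apply, Matrix.submatrix_apply,
        Pi.smul_apply, smul_eq_mul] at h2
      exact h2.symm
    calc (μ.re + c) * ‖v x‖
        ≤ ‖μ + (c : ℂ)‖ * ‖v x‖ := by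
          apply mul_le_mul_of_nonneg_right _ (norm_nonneg _)
          have h3 : (μ + (c : ℂ)).re = μ.re + c := by simp
          rw [← h3]
          exact Complex.re_le_norm _
      _ = ‖(μ + (c : ℂ)) * v x‖ := (norm_mul _ _).symm
      _ = ‖∑ y : {y // y ∈ I}, ((N x.val y.val : ℂ)) * v y‖ := by rw [h1]
      _ ≤ ∑ y : {y // y ∈ I}, ‖((N x.val y.val : ℂ)) * v y‖ :=
          norm_sum_le _ _
      _ = ∑ y : {y // y ∈ I}, N x.val y.val * ‖v y‖ := by
          refine Finset.sum_congr rfl fun y _ => ?_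
          rw [norm_mul, Complex.norm_real, Real.norm_eq_abs, abs_of_nonneg (hN0 _ _)]
  -- the key inequality N w ≥ (μ.re + c) w
  have hkey : ∀ i, (μ.re + c) * w i ≤ ∑ j, N i j * w j := by
    intro i
    by_cases hi : i ∈ I
    · have hsum : ∑ j, N i j * w j = ∑ y : {y // y ∈ I}, N i y.val * ‖v y‖ := by
        have h0 : ∑ j : Fin d, N i j * w j = ∑ j ∈ I, N i j * w j :=
          (Finset.sum_subset (Finset.subset_univ I) (fun x _ hx => by
            rw [hwdef]
            dsimp only
            rw [dif_neg hx, mul_zero])).symm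
        rw [h0, Finset.sum_subtype I (fun x => Iff.rfl) (fun j => N i j * w j)]
        refine Finset.sum_congr rfl fun y _ => ?_
        rw [hwdef]
        dsimp only
        rw [dif_pos y.2]
      rw [hsum]
      have hwi : w i = ‖v ⟨i, hi⟩‖ := by
        rw [hwdef]
        dsimp only
        rw [dif_pos hi]
      rw [hwi]
      exact hper ⟨i, hi⟩
    · have hwi : w i = 0 := by
        rw [hwdef]
        dsimp only
        rw [dif_neg hi]
      rw [hwi, mul_zero]
      exact Finset.sum_nonneg fun j _ => mul_nonneg (hN0 i j) (hw0 j)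
  -- analytic part: the resolvent is entrywise nonnegative on (c, ∞)
  set s0 : ℝ := c + μ.re / 2 with hs0def
  have hcs0 : c < s0 := by rw [hs0def]; linarith
  have hs0ρ : s0 < μ.re + c := by rw [hs0def]; linarith
  have hs00 : 0 < s0 := lt_of_le_of_lt hc0 hcs0
  set E : ℝ := ∑ p : Fin d, ∑ q : Fin d, N p q with hEdef
  have hE0 : 0 ≤ E := Finset.sum_nonneg fun p _ => Finset.sum_nonneg fun q _ => hN0 p q
  have hNE : ∀ i j, N i j ≤ E := by
    intro i j
    have h1 : N i j ≤ ∑ q, N i q :=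
      Finset.single_le_sum (f := fun q => N i q) (fun q _ => hN0 i q) (Finset.mem_univ j)
    have h2 : (∑ q, N i q) ≤ E :=
      Finset.single_le_sum (f := fun p => ∑ q, N p q)
        (fun p _ => Finset.sum_nonneg fun q _ => hN0 p q) (Finset.mem_univ i)
    linarith
  set T : ℝ := s0 + 1 + d * E with hTdef
  have hs0T : s0 < T := by
    rw [hTdef]
    have : 0 ≤ (d : ℝ) * E := mul_nonneg (Nat.cast_nonneg d) hE0
    linarith
  have hcT : c < T := lt_trans hcs0 hs0T
  have hT0 : 0 < T := lt_trans hs00 hs0T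
  have hdET : (d : ℝ) * E < T := by rw [hTdef]; linarith
  -- the resolvent
  set R : ℝ → Matrix (Fin d) (Fin d) ℝ := fun s => (s • 1 - N)⁻¹ with hRdef
  have hRinv : ∀ s : ℝ, c < s →
      (s • 1 - N) * R s = 1 ∧ R s * (s • 1 - N) = 1 := fun s hs =>
    ⟨Matrix.mul_nonsing_inv _ (hdet s hs), Matrix.nonsing_inv_mul _ (hdet s hs)⟩
  -- base case
  have hRT : ∀ i j, 0 ≤ R T i j :=
    resolvent_base N T E hT0 hN0 hNE hdET (hRinv T hcT).1
  -- compact bound for the resolvent entries on [s0, T]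
  have hRc : ∀ p q : Fin d, ContinuousOn (fun s => R s p q) (Set.Icc s0 T) := by
    intro p q
    have hAc : Continuous (fun s : ℝ => s • (1 : Matrix (Fin d) (Fin d) ℝ) - N) :=
      (continuous_id.smul continuous_const).sub continuous_const
    have hdetc : Continuous fun s : ℝ => (s • (1 : Matrix (Fin d) (Fin d) ℝ) - N).det :=
      hAc.matrix_det
    have hadjc : Continuous fun s : ℝ =>
        (s • (1 : Matrix (Fin d) (Fin d) ℝ) - N).adjugate p q :=
      (hAc.matrix_adjugate.matrix_elem p q)
    have heq : ∀ s : ℝ, R s p q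
        = ((s • (1 : Matrix (Fin d) (Fin d) ℝ) - N).det)⁻¹
          * (s • (1 : Matrix (Fin d) (Fin d) ℝ) - N).adjugate p q := by
      intro s
      rw [hRdef]
      dsimp only
      rw [Matrix.inv_def, Ring.inverse_eq_inv, Matrix.smul_apply, smul_eq_mul]
    have hcont : ContinuousOn (fun s : ℝ =>
        ((s • (1 : Matrix (Fin d) (Fin d) ℝ) - N).det)⁻¹
          * (s • (1 : Matrix (Fin d) (Fin d) ℝ) - N).adjugate p q) (Set.Icc s0 T) := by
      apply ContinuousOn.mul _ hadjc.continuousOn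
      apply ContinuousOn.inv₀ hdetc.continuousOn
      intro x hx
      exact (hdet x (lt_of_lt_of_le hcs0 hx.1)).ne_zero
    exact hcont.congr fun s _ => heq s
  have hgc : ContinuousOn (fun s => ∑ p : Fin d, ∑ q : Fin d, |R s p q|) (Set.Icc s0 T) := by
    apply continuousOn_finset_sum
    intro p _
    apply continuousOn_finset_sum
    intro q _
    exact (hRc p q).abs
  obtain ⟨x₀, hx₀, hmax⟩ := (isCompact_Icc).exists_isMaxOn (Set.nonempty_Icc.mpr hs0T.le) hgc
  set K : ℝ := ∑ p : Fin d, ∑ q : Fin d, |R x₀ p q| with hKdef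
  have hK0 : 0 ≤ K :=
    Finset.sum_nonneg fun p _ => Finset.sum_nonneg fun q _ => abs_nonneg _
  have hRK : ∀ s ∈ Set.Icc s0 T, ∀ p q, |R s p q| ≤ K := by
    intro s hs p q
    exact le_trans (entry_abs_le_total (R s) p q) (hmax hs)
  -- the grid
  set n : ℕ := ⌈(T - s0) * ((d : ℝ) * K)⌉₊ + 1 with hndef
  have hn0 : 0 < n := Nat.succ_pos _
  have hnR : (T - s0) * ((d : ℝ) * K) < (n : ℕ) := by
    calc (T - s0) * ((d : ℝ) * K) ≤ (⌈(T - s0) * ((d : ℝ) * K)⌉₊ : ℝ) := Nat.le_ceil _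
      _ < (n : ℝ) := by rw [hndef]; push_cast; linarith
  set δ : ℝ := (T - s0) / n with hδdef
  have hδ0 : 0 ≤ δ := div_nonneg (by linarith) (Nat.cast_nonneg n)
  have hnne : (n : ℝ) ≠ 0 := Nat.cast_ne_zero.mpr hn0.ne'
  have hδq : (d : ℝ) * (δ * K) < 1 := by
    rw [hδdef]
    rw [div_mul_eq_mul_div, mul_div_assoc']
    rw [div_lt_one (by positivity)]
    calc (d : ℝ) * ((T - s0) * K) = (T - s0) * ((d : ℝ) * K) := by ring
      _ < (n : ℝ) := hnR
  set t : ℕ → ℝ := fun k => T - k * δ with htdef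
  have htmem : ∀ k : ℕ, k ≤ n → t k ∈ Set.Icc s0 T := by
    intro k hk
    constructor
    · have h1 : (k : ℝ) * δ ≤ (n : ℝ) * δ :=
        mul_le_mul_of_nonneg_right (Nat.cast_le.mpr hk) hδ0
      have h2 : (n : ℝ) * δ = T - s0 := by
        rw [hδdef, mul_div_assoc']; field_simp
      rw [htdef]
      dsimp only
      linarith
    · rw [htdef]
      dsimp only
      have : 0 ≤ (k : ℝ) * δ := mul_nonneg (Nat.cast_nonneg k) hδ0
      linarith
  have htn : t n = s0 := by
    rw [htdef, hδdef]
    dsimp only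
    field_simp
    ring
  -- descent
  have hdesc : ∀ k : ℕ, k ≤ n → ∀ i j, 0 ≤ R (t k) i j := by
    intro k
    induction k with
    | zero =>
      intro _
      have ht0 : t 0 = T := by rw [htdef]; dsimp only; push_cast; ring
      rw [ht0]
      exact hRT
    | succ k ih =>
      intro hk
      have hk' : k ≤ n := Nat.le_of_succ_le hk
      have ihk := ih hk'
      have htkI := htmem k hk'
      have hskI := htmem (k + 1) hk
      have hctk : c < t k := lt_of_lt_of_le hcs0 htkI.1
      have hcsk : c < t (k + 1) := lt_of_lt_of_le hcs0 hskI.1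
      have hts : t k - t (k + 1) = δ := by rw [htdef]; dsimp only; push_cast; ring
      have hst : t (k + 1) ≤ t k := by
        have := hδ0; linarith [hts]
      apply resolvent_step N (t (k + 1)) (t k) K hst (hRinv _ hctk).1 (hRinv _ hctk).2
        (hRinv _ hcsk).1 ihk
      · intro i j
        have := hRK (t k) htkI i j
        have h2 := le_abs_self (R (t k) i j)
        linarith
      · rw [hts]
        exact hδq
  have hRs0 : ∀ i j, 0 ≤ R s0 i j := by
    have := hdesc n le_rfl
    rwa [htn] at this
  -- final contradiction : w ≤ 0
  have hwle : ∀ i, w i ≤ 0 := by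
    intro i
    have hw_eq : w i = ∑ j, R s0 i j * ((s0 • (1 : Matrix (Fin d) (Fin d) ℝ) - N) *ᵥ w) j := by
      have h1 : (R s0 * (s0 • 1 - N)) *ᵥ w = w := by
        rw [(hRinv s0 hcs0).2, Matrix.one_mulVec]
      conv_lhs => rw [← h1]
      rw [← Matrix.mulVec_mulVec]
      simp [Matrix.mulVec, dotProduct]
    rw [hw_eq]
    apply Finset.sum_nonpos
    intro j _
    apply mul_nonpos_of_nonneg_of_nonpos (hRs0 i j)
    have h2 : ((s0 • (1 : Matrix (Fin d) (Fin d) ℝ) - N) *ᵥ w) j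
        = s0 * w j - ∑ k, N j k * w k := by
      rw [Matrix.sub_mulVec, Matrix.smul_mulVec, Matrix.one_mulVec]
      simp [Matrix.mulVec, dotProduct]
    rw [h2]
    have h3 := hkey j
    have h4 := hw0 j
    nlinarith
  -- but w is not identically zero
  obtain ⟨x₁, hx₁⟩ := Function.ne_iff.mp hv0
  have hwx : w x₁.val = ‖v x₁‖ := by
    rw [hwdef]
    dsimp only
    rw [dif_pos x₁.2]
  have hwz : w x₁.val = 0 := le_antisymm (hwle _) (hw0 _)
  rw [hwx] at hwz
  exact hx₁ (norm_eq_zero.mp hwz)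
end

section
/- Let M be a d×d Metzler matrix. There exists a nonzero v ∈ ℝ^d_{≥0} with (vM)_m > 0 for all m ∈ supp(v) if and only if some principal submatrix of M admits an increasing direction, i.e., there exist nonempty I ⊆ [d] and w ∈ ℝ^{|I|}_{>0} with wM^I ∈ ℝ^{|I|}_{>0}. -/
open Matrix BigOperators

/-! Take `I = supp v`, resp. extend `w` by zero off `I`: a vector vanishing off `I` has the same
product with `M`, read on `I`, as its restriction to `I` has with `M^I`. -/

namespace Matrix

variable {α β γ R : Type*} [Fintype α] [NonUnitalNonAssocSemiring R]

theorem vecMul_submatrix_val_of_eq_zero_off (s : Finset α) {v : α → R}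
    (hv : ∀ i ∉ s, v i = 0) (M : Matrix α β R) (f : γ → β) :
    (fun i : s => v i) ᵥ* M.submatrix Subtype.val f = (v ᵥ* M) ∘ f := by
  classical
  funext j
  simp only [vecMul, dotProduct, submatrix_apply, Function.comp_apply]
  rw [Finset.sum_coe_sort s (fun i => v i * M i (f j))]
  exact Finset.sum_subset (Finset.subset_univ s) fun i _ hi => by simp [hv i hi]

end Matrix

theorem exists_v_iff_submatrix_increasing_general
    (d : ℕ) (M : Matrix (Fin d) (Fin d) ℝ) :
    (∃ v : Fin d → ℝ, v ≠ 0 ∧ (∀ i, 0 ≤ v i) ∧ ∀ m, v m ≠ 0 → 0 < (v ᵥ* M) m) ↔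
    (∃ I : Finset (Fin d), I.Nonempty ∧
      ∃ w : {x // x ∈ I} → ℝ, (∀ i, 0 < w i) ∧
        ∀ j, 0 < (w ᵥ* M.submatrix (Subtype.val : {x // x ∈ I} → Fin d) (Subtype.val : {x // x ∈ I} → Fin d)) j) := by
  classical
  constructor
  · rintro ⟨v, hv0, hv_nonneg, hv_pos⟩
    set I := Finset.univ.filter (v · ≠ 0)
    have hmem (i : Fin d) : i ∈ I ↔ v i ≠ 0 := by simp [I]
    have hvI : ∀ i ∉ I, v i = 0 := fun i hi => not_not.mp (mt (hmem i).mpr hi)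
    obtain ⟨m, hm⟩ := Function.ne_iff.mp hv0
    refine ⟨I, ⟨m, (hmem m).mpr hm⟩, fun i => v i, fun i => ?_, fun j => ?_⟩
    · exact (hv_nonneg i).lt_of_ne' ((hmem i).mp i.2)
    · rw [vecMul_submatrix_val_of_eq_zero_off I hvI]
      exact hv_pos j ((hmem j).mp j.2)
  · rintro ⟨I, ⟨m, hm⟩, w, hw_pos, hwM_pos⟩
    set v : Fin d → ℝ := fun i => if h : i ∈ I then w ⟨i, h⟩ else 0
    have hvI : ∀ i ∉ I, v i = 0 := fun i hi => dif_neg hi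
    have hv_restrict : (fun i : I => v i) = w := funext fun i => dif_pos i.2
    refine ⟨v, fun h => (hw_pos ⟨m, hm⟩).ne' ?_, fun i => ?_, fun j hj => ?_⟩
    · simpa [v, hm] using congrFun h m
    · by_cases hi : i ∈ I
      · simpa [v, hi] using (hw_pos ⟨i, hi⟩).le
      · exact (hvI i hi).ge
    · have hjI : j ∈ I := by_contra fun hj' => hj (hvI j hj')
      have := hwM_pos ⟨j, hjI⟩
      rwa [← hv_restrict, vecMul_submatrix_val_of_eq_zero_off I hvI] at this

/-- Existence of a nonzero nonnegative `v` with `(vM)_m > 0` on its support is equivalent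
to some principal submatrix of `M` having an increasing direction. -/
theorem exists_v_iff_submatrix_increasing
    (d : ℕ) (M : Matrix (Fin d) (Fin d) ℝ)
    (hMet : ∀ i j, i ≠ j → 0 ≤ M i j) :
    (∃ v : Fin d → ℝ, v ≠ 0 ∧ (∀ i, 0 ≤ v i) ∧ ∀ m, v m ≠ 0 → 0 < (v ᵥ* M) m) ↔
    (∃ I : Finset (Fin d), I.Nonempty ∧
      ∃ w : {x // x ∈ I} → ℝ, (∀ i, 0 < w i) ∧
        ∀ j, 0 < (w ᵥ* M.submatrix (Subtype.val : {x // x ∈ I} → Fin d) (Subtype.val : {x // x ∈ I} → Fin d)) j) :=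
  exists_v_iff_submatrix_increasing_general d M
end
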